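/- In the n-state, n-letter NFA with transitions Δ(q_n,a_n)=∅, Δ(q_i,a_i)={q_{i+1},…,q_n} for i<n, Δ(q_i,a_j)=Q for j<i, Δ(q_i,a_j)={q_i} for i<j, for every word w' and every letter a, the binary value bin(w'a) ≥ bin(w') - 1, where bin(w) is the number with binary digits x₁…x_n (most significant first) with x_i = 1 iff q_i ∈ Q·w. -/
import Mathlib

/-- The action of an NFA with transition function `Δ` on a set of states,
extended homomorphically to words. -/
def wordImage {Q σ : Type*} (Δ : Q → σ → Set Q) : Set Q → List σ → Set Q
  | S, [] => S
  | S, a :: w => wordImage Δ (⋃ q ∈ S, Δ q a) w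

/-- The `(n+1)`-state, `(n+1)`-letter counter NFA: state `i` is `q_{i+1}` and
letter `j` is `a_{j+1}` (0-based). `Δ(q_i, a_i) = {q_{i+1}, …}` for `i` not
last, `Δ(q_last, a_last) = ∅`, `Δ(q_i, a_j) = Q` for `j < i`, and
`Δ(q_i, a_j) = {q_i}` for `i < j`. -/
def ctrDelta (n : ℕ) : Fin (n + 1) → Fin (n + 1) → Set (Fin (n + 1)) := fun i j =>
  if i = j then (if i = Fin.last n then ∅ else {h | i < h})
  else if j < i then Set.univ else {i}

/-- The number whose binary digits (most significant first) record which states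
are active after reading `w`. -/
noncomputable def binVal (n : ℕ) (S : Set (Fin (n + 1))) : ℕ :=
  ∑ i : Fin (n + 1), S.indicator (fun i => 2 ^ (n - i.val)) i

lemma wordImage_append {Q σ : Type*} (Δ : Q → σ → Set Q) (S : Set Q) (w w' : List σ) :
    wordImage Δ S (w ++ w') = wordImage Δ (wordImage Δ S w) w' := by
  induction w generalizing S with
  | nil => simp [wordImage]
  | cons a w ih => simp [wordImage, ih]

lemma binVal_mono (n : ℕ) {S T : Set (Fin (n+1))} (h : S ⊆ T) : binVal n S ≤ binVal n T := by
  apply Finset.sum_le_sum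
  intro i _
  exact Set.indicator_le_indicator_of_subset h (fun _ => Nat.zero_le _) i

lemma binVal_union (n : ℕ) {S T : Set (Fin (n+1))} (h : Disjoint S T) :
    binVal n (S ∪ T) = binVal n S + binVal n T := by
  unfold binVal
  rw [← Finset.sum_add_distrib]
  congr 1; ext i
  rw [Set.indicator_union_of_disjoint h]

lemma binVal_singleton (n : ℕ) (a : Fin (n+1)) : binVal n {a} = 2 ^ (n - a.val) := by
  unfold binVal
  classical
  simp [Set.indicator_apply]

lemma sum_two_pow (m : ℕ) : ∑ k ∈ Finset.range m, 2^k = 2^m - 1 := by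
  induction m with
  | zero => simp
  | succ m ih =>
    rw [Finset.sum_range_succ, ih, pow_succ]
    have : 1 ≤ 2^m := Nat.one_le_two_pow
    omega

lemma binVal_Ioi (n : ℕ) (a : Fin (n+1)) : binVal n (Set.Ioi a) = 2 ^ (n - a.val) - 1 := by
  classical
  unfold binVal
  rw [show (∑ i : Fin (n+1), (Set.Ioi a).indicator (fun i => 2 ^ (n - i.val)) i)
      = ∑ i ∈ Finset.Ioi a, 2 ^ (n - i.val) from ?_, ← sum_two_pow]
  · apply Finset.sum_nbij' (fun i => n - i.val) (fun k => ⟨n - k, by omega⟩)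
    · intro i hi
      simp only [Finset.mem_Ioi] at hi
      simp only [Finset.mem_range]
      omega
    · intro k hk
      simp only [Finset.mem_range] at hk
      simp only [Finset.mem_Ioi, Fin.lt_def]
      omega
    · intro i hi
      simp only [Finset.mem_Ioi] at hi
      ext
      simp
      omega
    · intro k hk
      simp only [Finset.mem_range] at hk
      simp
      omega
    · intro i _; rfl
  · rw [Finset.sum_indicator_eq_sum_filter]
    congr 1
    ext i
    simp

/-- In the counter NFA, applying any single letter decreases the tracked binary
value by at most one. -/
theorem stmt5 (n : ℕ) (w : List (Fin (n + 1))) (a : Fin (n + 1)) :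
    binVal n (wordImage (ctrDelta n) Set.univ w) - 1 ≤
      binVal n (wordImage (ctrDelta n) Set.univ (w ++ [a])) := by
  rw [wordImage_append]
  set S := wordImage (ctrDelta n) Set.univ w with hS
  show binVal n S - 1 ≤ binVal n (wordImage (ctrDelta n) (⋃ q ∈ S, ctrDelta n q a) [])
  simp only [wordImage]
  set T := ⋃ q ∈ S, ctrDelta n q a with hT
  by_cases h1 : ∃ q ∈ S, a < q
  · obtain ⟨q, hq, haq⟩ := h1
    have hTuniv : T = Set.univ := by
      apply Set.eq_univ_of_univ_subset
      have : ctrDelta n q a = Set.univ := by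
        unfold ctrDelta
        rw [if_neg haq.ne', if_pos haq]
      rw [← this, hT]
      exact Set.subset_biUnion_of_mem (u := fun q => ctrDelta n q a) hq
    rw [hTuniv]
    calc binVal n S - 1 ≤ binVal n S := Nat.sub_le _ _
      _ ≤ binVal n Set.univ := binVal_mono n (Set.subset_univ S)
  · push_neg at h1
    have hle : ∀ q ∈ S, q ≤ a := h1
    have hsub : S \ {a} ⊆ T := by
      intro q hq
      have hqa : q < a := lt_of_le_of_ne (hle q hq.1) hq.2
      have : ctrDelta n q a = {q} := by
        unfold ctrDelta
        rw [if_neg (ne_of_lt hqa), if_neg (not_lt.mpr (le_of_lt hqa))]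
      apply Set.mem_biUnion hq.1
      rw [this]; rfl
    by_cases haS : a ∈ S
    · have hdiff : binVal n S = binVal n (S \ {a}) + 2 ^ (n - a.val) := by
        rw [← binVal_singleton n a, ← binVal_union n (by simp [Set.disjoint_singleton_right])]
        congr 1
        rw [Set.diff_union_self, Set.union_eq_self_of_subset_right (by simpa)]
      by_cases hlast : a = Fin.last n
      · have hz : n - a.val = 0 := by rw [hlast]; simp
        have hm := binVal_mono n hsub
        rw [hz, pow_zero] at hdiff
        omega
      · have hIoi : Set.Ioi a ⊆ T := by
          have : ctrDelta n a a = {h | a < h} := by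
            unfold ctrDelta
            rw [if_pos rfl, if_neg hlast]
          intro x hx
          exact Set.mem_biUnion haS (this ▸ hx)
        have hsub2 : (S \ {a}) ∪ Set.Ioi a ⊆ T := Set.union_subset hsub hIoi
        have hdisj : Disjoint (S \ {a}) (Set.Ioi a) := by
          rw [Set.disjoint_left]
          intro q hq hq'
          have : q < a := lt_of_le_of_ne (hle q hq.1) hq.2
          exact absurd hq' (by simp [not_lt.mpr (le_of_lt this)])
        have := binVal_mono n hsub2
        rw [binVal_union n hdisj, binVal_Ioi] at this
        have h2 : 1 ≤ 2 ^ (n - a.val) := Nat.one_le_two_pow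
        omega
    · have hsubS : S ⊆ T := by
        intro q hq
        exact hsub ⟨hq, by simp; rintro rfl; exact haS hq⟩
      calc binVal n S - 1 ≤ binVal n S := Nat.sub_le _ _
        _ ≤ binVal n T := binVal_mono n hsubS
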